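/- arXiv:2205.06737 — 5 statements merged into one kernel-verified Lean document; each statement's English description precedes it below -/
import Mathlib

section
/- Let g be an inner product (a symmetric, positive-definite bilinear form) on the real vector space of real n×n matrices such that g(XQ, YQ) = g(X, Y) for every orthogonal matrix Q ∈ O(n) and all n×n matrices X, Y. Then there exists a unique symmetric positive definite n×n matrix R such that g(X, Y) = tr(R X Yᵀ) for all X, Y. Conversely, for every symmetric positive definite R, the form (X, Y) ↦ tr(R X Yᵀ) is an inner product on n×n matrices invariant under right multiplication by O(n). -/
/-!
Write `E i j` for the matrix units. Sign changes of one column are orthogonal, and invariance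
under them forces `g (E i j) (E a b) = 0` for `j ≠ b`; column transpositions make
`g (E i j) (E a j)` independent of `j`. Hence `g` agrees on matrix units, and so everywhere, with `(X, Y) ↦ tr (R X Yᵀ)` for
`R a i = g (E i i) (E a i)`. Evaluating this form on matrix units recovers `R`, which gives
uniqueness and, from the symmetry of `g`, the symmetry of `R`; taking `X = x e_pᵀ` turns
`tr (R X Xᵀ)` into `xᵀ R x`. Conversely `tr (R X Xᵀ)` is the sum of `x_jᵀ R x_j` over the
columns `x_j` of `X`.
-/

open Matrix

namespace Matrix

variable {m ι : Type*}

lemma diagonal_mul_transpose_self [Fintype ι] [DecidableEq ι] {d : ι → ℝ}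
    (hd : ∀ c, d c * d c = 1) : diagonal d * (diagonal d)ᵀ = 1 := by
  rw [diagonal_transpose, diagonal_mul_diagonal, ← diagonal_one]
  exact congrArg diagonal (funext hd)

lemma permMatrix_mul_transpose [Fintype ι] [DecidableEq ι] (σ : Equiv.Perm ι) :
    σ.permMatrix ℝ * (σ.permMatrix ℝ)ᵀ = 1 := by
  rw [transpose_permMatrix, ← permMatrix_mul, inv_mul_cancel, permMatrix_one]

lemma single_mul_diagonal [Fintype ι] [DecidableEq m] [DecidableEq ι] (i : m) (j : ι)
    (d : ι → ℝ) : single i j (1 : ℝ) * diagonal d = d j • single i j 1 := by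
  ext a b
  rcases eq_or_ne b j with rfl | hb
  · simp [single_apply]
  · simp [hb.symm]

lemma single_mul_permMatrix [Fintype ι] [DecidableEq m] [DecidableEq ι] (i : m) (j : ι)
    (σ : Equiv.Perm ι) :
    single i j (1 : ℝ) * σ.permMatrix ℝ = single i (σ j) 1 := by
  rw [PEquiv.mul_toMatrix_toPEquiv]
  ext a b
  simp [single_apply, Equiv.eq_symm_apply]

section traceForm

variable [Fintype m] [Fintype ι]

def traceForm (R : Matrix m m ℝ) : Matrix m ι ℝ →ₗ[ℝ] Matrix m ι ℝ →ₗ[ℝ] ℝ :=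
  LinearMap.mk₂ ℝ (fun X Y => (R * X * Yᵀ).trace)
    (fun X X' Y => by simp [Matrix.mul_add, Matrix.add_mul])
    (fun c X Y => by simp)
    (fun X Y Y' => by simp [Matrix.mul_add])
    (fun c X Y => by simp)

@[simp]
lemma traceForm_apply (R : Matrix m m ℝ) (X Y : Matrix m ι ℝ) :
    traceForm R X Y = (R * X * Yᵀ).trace := rfl

lemma trace_mul_single_mul_transpose_single [DecidableEq m] [DecidableEq ι] (R : Matrix m m ℝ)
    (i a : m) (j b : ι) :
    (R * single i j (1 : ℝ) * (single a b (1 : ℝ))ᵀ).trace = if j = b then R a i else 0 := by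
  rw [transpose_single, Matrix.mul_assoc]
  split_ifs with h
  · subst h; simp [trace_mul_single]
  · simp [h]

lemma trace_mul_mul_transpose_comm {R : Matrix m m ℝ} (hR : R.IsSymm) (X Y : Matrix m ι ℝ) :
    (R * X * Yᵀ).trace = (R * Y * Xᵀ).trace := by
  rw [← trace_transpose, transpose_mul, transpose_mul, transpose_transpose, hR.eq,
    ← Matrix.mul_assoc, trace_mul_cycle]

lemma trace_mul_mul_transpose_mul_orthogonal [DecidableEq ι] (R : Matrix m m ℝ)
    (X Y : Matrix m ι ℝ) {Q : Matrix ι ι ℝ} (hQ : Q * Qᵀ = 1) :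
    (R * (X * Q) * (Y * Q)ᵀ).trace = (R * X * Yᵀ).trace := by
  rw [transpose_mul, ← Matrix.mul_assoc R X Q, Matrix.mul_assoc (R * X) Q, ← Matrix.mul_assoc Q,
    hQ, Matrix.one_mul]

lemma trace_mul_mul_transpose_self (R : Matrix m m ℝ) (X : Matrix m ι ℝ) :
    (R * X * Xᵀ).trace = ∑ j, Xᵀ j ⬝ᵥ R *ᵥ Xᵀ j := by
  rw [trace_mul_cycle, trace]
  simp only [diag_apply, mul_apply, transpose_apply, dotProduct, mulVec, Finset.sum_mul,
    Finset.mul_sum]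
  refine Finset.sum_congr rfl fun j _ => Finset.sum_comm.trans ?_
  exact Finset.sum_congr rfl fun _ _ => Finset.sum_congr rfl fun _ _ => by ring

lemma PosDef.trace_mul_mul_transpose_self_pos {R : Matrix m m ℝ} (hR : R.PosDef)
    {X : Matrix m ι ℝ} (hX : X ≠ 0) : 0 < (R * X * Xᵀ).trace := by
  obtain ⟨j, hj⟩ : ∃ j, Xᵀ j ≠ 0 := by
    by_contra! h
    exact hX (transpose_eq_zero.mp (funext h))
  rw [trace_mul_mul_transpose_self]
  exact Finset.sum_pos' (fun k _ => by simpa using hR.posSemidef.dotProduct_mulVec_nonneg (Xᵀ k))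
    ⟨j, Finset.mem_univ j, by simpa using hR.dotProduct_mulVec_pos hj⟩

end traceForm

section square

variable [Fintype ι] [DecidableEq ι]

lemma eq_of_forall_trace_mul_mul_transpose_eq {R R' : Matrix ι ι ℝ}
    (h : ∀ X Y : Matrix ι ι ℝ, (R * X * Yᵀ).trace = (R' * X * Yᵀ).trace) : R = R' := by
  ext a i
  simpa only [trace_mul_single_mul_transpose_single, if_pos] using h (single i i 1) (single a i 1)

lemma isSymm_of_forall_trace_mul_mul_transpose_comm {R : Matrix ι ι ℝ}
    (h : ∀ X Y : Matrix ι ι ℝ, (R * X * Yᵀ).trace = (R * Y * Xᵀ).trace) : R.IsSymm :=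
  IsSymm.ext_iff.mpr fun i j => by
    simpa only [trace_mul_single_mul_transpose_single, if_pos] using
      h (single i i 1) (single j i 1)

lemma posDef_of_forall_trace_mul_mul_transpose_self_pos {R : Matrix ι ι ℝ} (hR : R.IsSymm)
    (h : ∀ X : Matrix ι ι ℝ, X ≠ 0 → 0 < (R * X * Xᵀ).trace) : R.PosDef := by
  refine PosDef.of_dotProduct_mulVec_pos (isHermitian_iff_isSymm.mpr hR) fun x hx => ?_
  obtain ⟨p, hp⟩ := Function.ne_iff.mp hx
  let X := vecMulVec x (Pi.single p 1)
  have hX : X ≠ 0 := vecMulVec_ne_zero hx (by simp)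
  have hXX : X * Xᵀ = vecMulVec x x := by
    simp [X, transpose_vecMulVec, vecMulVec_mul_vecMulVec]
  simpa [Matrix.mul_assoc, hXX, mul_vecMulVec, dotProduct_comm] using h X hX

end square

def IsRightOrthogonalInvariant [Fintype ι] [DecidableEq ι]
    (g : Matrix m ι ℝ →ₗ[ℝ] Matrix m ι ℝ →ₗ[ℝ] ℝ) : Prop :=
  ∀ Q : Matrix ι ι ℝ, Q * Qᵀ = 1 → ∀ X Y, g (X * Q) (Y * Q) = g X Y

namespace IsRightOrthogonalInvariant

variable [Fintype ι] [DecidableEq m] [DecidableEq ι]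

lemma apply_single_single_of_ne {g : Matrix m ι ℝ →ₗ[ℝ] Matrix m ι ℝ →ₗ[ℝ] ℝ}
    (hg : IsRightOrthogonalInvariant g) (i a : m) {j b : ι} (hjb : j ≠ b) :
    g (single i j 1) (single a b 1) = 0 := by
  let d : ι → ℝ := fun c => if c = b then -1 else 1
  have hd : ∀ c, d c * d c = 1 := fun c => by by_cases hc : c = b <;> simp [d, hc]
  have h := hg _ (diagonal_mul_transpose_self hd) (single i j 1) (single a b 1)
  simp only [single_mul_diagonal, map_smul, LinearMap.smul_apply, smul_eq_mul, d, if_neg hjb,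
    if_pos] at h
  linarith

lemma apply_single_single_eq {g : Matrix m ι ℝ →ₗ[ℝ] Matrix m ι ℝ →ₗ[ℝ] ℝ}
    (hg : IsRightOrthogonalInvariant g) (i a : m) (j k : ι) :
    g (single i j 1) (single a j 1) = g (single i k 1) (single a k 1) := by
  have h := hg _ (permMatrix_mul_transpose (Equiv.swap j k)) (single i j 1) (single a j 1)
  rwa [single_mul_permMatrix, single_mul_permMatrix, Equiv.swap_apply_left, eq_comm] at h

lemma eq_traceForm [Fintype m] {g : Matrix m ι ℝ →ₗ[ℝ] Matrix m ι ℝ →ₗ[ℝ] ℝ}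
    (hg : IsRightOrthogonalInvariant g) {R : Matrix m m ℝ}
    (hR : ∀ i a j, g (single i j 1) (single a j 1) = R a i) : g = traceForm R := by
  refine LinearMap.ext_basis (stdBasis ℝ m ι) (stdBasis ℝ m ι) fun ⟨i, j⟩ ⟨a, b⟩ => ?_
  simp only [stdBasis_eq_single, traceForm_apply, trace_mul_single_mul_transpose_single]
  split_ifs with hjb
  · subst hjb; exact hR i a j
  · exact hg.apply_single_single_of_ne i a hjb

lemma exists_eq_traceForm {g : Matrix ι ι ℝ →ₗ[ℝ] Matrix ι ι ℝ →ₗ[ℝ] ℝ}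
    (hg : IsRightOrthogonalInvariant g) : ∃ R : Matrix ι ι ℝ, g = traceForm R :=
  ⟨of fun a i => g (single i i 1) (single a i 1),
    hg.eq_traceForm fun i a j => hg.apply_single_single_eq i a j i⟩

end IsRightOrthogonalInvariant

end Matrix

/-- An inner product `g` on real `n × n` matrices that is invariant under right
multiplication by orthogonal matrices is of the form `g X Y = tr (R * X * Yᵀ)` for a unique
symmetric positive definite matrix `R`; conversely, any such `R` yields an inner product
invariant under right multiplication by `O(n)`. -/
theorem trR_metrics_characterization (n : ℕ)
    (g : Matrix (Fin n) (Fin n) ℝ →ₗ[ℝ] Matrix (Fin n) (Fin n) ℝ →ₗ[ℝ] ℝ)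
    (hsymm : ∀ X Y, g X Y = g Y X)
    (hpos : ∀ X, X ≠ 0 → 0 < g X X)
    (hinv : ∀ Q : Matrix (Fin n) (Fin n) ℝ, Q * Qᵀ = 1 → ∀ X Y, g (X * Q) (Y * Q) = g X Y) :
    (∃! R : Matrix (Fin n) (Fin n) ℝ,
        R.PosDef ∧ ∀ X Y : Matrix (Fin n) (Fin n) ℝ, g X Y = (R * X * Yᵀ).trace) ∧
    (∀ R : Matrix (Fin n) (Fin n) ℝ, R.PosDef →
      (∀ X Y : Matrix (Fin n) (Fin n) ℝ, (R * X * Yᵀ).trace = (R * Y * Xᵀ).trace) ∧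
      (∀ X : Matrix (Fin n) (Fin n) ℝ, X ≠ 0 → 0 < (R * X * Xᵀ).trace) ∧
      (∀ Q : Matrix (Fin n) (Fin n) ℝ, Q * Qᵀ = 1 →
        ∀ X Y : Matrix (Fin n) (Fin n) ℝ,
          (R * (X * Q) * (Y * Q)ᵀ).trace = (R * X * Yᵀ).trace)) := by
  obtain ⟨R, rfl⟩ := IsRightOrthogonalInvariant.exists_eq_traceForm hinv
  simp only [traceForm_apply] at hsymm hpos
  have hR : R.PosDef :=
    posDef_of_forall_trace_mul_mul_transpose_self_pos
      (isSymm_of_forall_trace_mul_mul_transpose_comm hsymm) hpos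
  refine ⟨⟨R, ⟨hR, traceForm_apply R⟩, fun R' hR' => ?_⟩, fun R' hR' => ⟨?_, ?_, ?_⟩⟩
  · exact eq_of_forall_trace_mul_mul_transpose_eq fun X Y => (hR'.2 X Y).symm
  · exact trace_mul_mul_transpose_comm (isHermitian_iff_isSymm.mp hR'.isHermitian)
  · exact fun X hX => hR'.trace_mul_mul_transpose_self_pos hX
  · exact fun Q hQ X Y => trace_mul_mul_transpose_mul_orthogonal R' X Y hQ
end

section
/- Let P be a symmetric positive definite real n×n matrix and B an arbitrary real n×n matrix. Then the improper integral X = ∫₀^∞ e^{−tP} B e^{−tP} dt converges, and X is the unique real n×n matrix satisfying the Lyapunov equation PX + XP = B. -/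
open Matrix MeasureTheory

/-!
Diagonalise `P = U D Uᴴ` with `D = diag λ`, `λ > 0`. In the eigenbasis the integrand has
entries `e^{-(λ_p + λ_q) t} B'_{pq}`, `B' = Uᴴ B U`, whose integrals `B'_{pq} / (λ_p + λ_q)`
form exactly the solution `M` of the diagonal equation `D M + M D = B'`; conjugating back
gives `P X + X P = B`.
Since this solves the equation for every `B`, the linear map `Y ↦ P Y + Y P` on the
finite-dimensional space of matrices is surjective, hence injective, which is uniqueness.
-/

section ExpDecay

variable {𝕜 : Type*} [RCLike 𝕜] {c : ℝ}

theorem integrableOn_exp_neg_mul_mul_Ioi (hc : 0 < c) (x : 𝕜) :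
    IntegrableOn (fun t : ℝ => (Real.exp (-c * t) : 𝕜) * x) (Set.Ioi 0) :=
  (exp_neg_integrableOn_Ioi 0 hc).ofReal.mul_const x

theorem integral_exp_neg_mul_mul_Ioi (hc : 0 < c) (x : 𝕜) :
    ∫ t in Set.Ioi 0, (Real.exp (-c * t) : 𝕜) * x = x / c := by
  have h := integral_exp_mul_Ioi (neg_lt_zero.2 hc) 0
  simp only [mul_zero, Real.exp_zero, neg_div_neg_eq] at h
  rw [integral_mul_const, integral_ofReal, h, RCLike.ofReal_div, RCLike.ofReal_one, one_div,
    inv_mul_eq_div]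

end ExpDecay

namespace Matrix

section Integral

variable {α 𝕜 l m n o : Type*} [MeasurableSpace α] {μ : Measure α} [RCLike 𝕜]
  [Fintype m] [Fintype n] {G : α → Matrix m n 𝕜}

theorem integrable_mul_mul_apply (hG : ∀ p q, Integrable (fun t => G t p q) μ)
    (U : Matrix l m 𝕜) (V : Matrix n o 𝕜) (i : l) (j : o) :
    Integrable (fun t => (U * G t * V) i j) μ := by
  simp only [mul_apply, Finset.sum_mul]
  exact integrable_finsetSum _ fun q _ => integrable_finsetSum _ fun p _ =>
    ((hG p q).const_mul _).mul_const _

theorem integral_mul_mul_apply (hG : ∀ p q, Integrable (fun t => G t p q) μ)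
    (U : Matrix l m 𝕜) (V : Matrix n o 𝕜) (i : l) (j : o) :
    ∫ t, (U * G t * V) i j ∂μ = (U * (of fun p q => ∫ t, G t p q ∂μ) * V) i j := by
  simp only [mul_apply, Finset.sum_mul, of_apply]
  rw [integral_finsetSum _ fun q _ => integrable_finsetSum _ fun p _ =>
    ((hG p q).const_mul _).mul_const _]
  refine Finset.sum_congr rfl fun q _ => ?_
  rw [integral_finsetSum _ fun p _ => ((hG p q).const_mul _).mul_const _]
  refine Finset.sum_congr rfl fun p _ => ?_
  rw [integral_mul_const, integral_const_mul]

end Integral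

theorem diagonal_mul_add_mul_diagonal_eq {K n : Type*} [Field K] [Fintype n] [DecidableEq n]
    {d : n → K} (hd : ∀ p q, d p + d q ≠ 0) (C : Matrix n n K) :
    diagonal d * (of fun p q => C p q / (d p + d q)) +
      (of fun p q => C p q / (d p + d q)) * diagonal d = C := by
  ext p q
  simp only [add_apply, diagonal_mul, mul_diagonal, of_apply]
  field_simp [hd p q]

open scoped ComplexOrder

variable {𝕜 n : Type*} [RCLike 𝕜] [Fintype n] [DecidableEq n]

noncomputable def lyapunovIntegral (A B : Matrix n n 𝕜) : Matrix n n 𝕜 :=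
  of fun i j => ∫ t in Set.Ioi (0 : ℝ),
    (NormedSpace.exp ((-t) • A) * B * NormedSpace.exp ((-t) • A)) i j

def lyapunovOperator (A : Matrix n n 𝕜) : Matrix n n 𝕜 →ₗ[𝕜] Matrix n n 𝕜 :=
  LinearMap.mulLeft 𝕜 A + LinearMap.mulRight 𝕜 A

namespace IsHermitian

variable {A : Matrix n n 𝕜} (hA : A.IsHermitian)

noncomputable abbrev conjEigenvectorUnitary : Matrix n n 𝕜 ≃⋆ₐ[𝕜] Matrix n n 𝕜 :=
  Unitary.conjStarAlgAut 𝕜 (Matrix n n 𝕜) hA.eigenvectorUnitary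

theorem exp_smul_eq (t : ℝ) :
    NormedSpace.exp (t • A) =
      hA.conjEigenvectorUnitary (diagonal fun k => (Real.exp (t * hA.eigenvalues k) : 𝕜)) := by
  have hconj := Matrix.exp_units_conj (Unitary.toUnits hA.eigenvectorUnitary)
    (diagonal fun k => ((t * hA.eigenvalues k : ℝ) : 𝕜))
  simp only [Unitary.val_toUnits_apply, Unitary.val_inv_toUnits_apply, ← Unitary.star_eq_inv,
    Unitary.coe_star] at hconj
  have hdiag : (diagonal fun k => ((t * hA.eigenvalues k : ℝ) : 𝕜)) =
      t • diagonal (RCLike.ofReal ∘ hA.eigenvalues) := by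
    rw [← diagonal_smul]; congr; ext k; simp [RCLike.real_smul_eq_coe_mul]
  conv_lhs => rw [hA.spectral_theorem, Unitary.conjStarAlgAut_apply, ← smul_mul,
    ← Matrix.mul_smul, ← hdiag, hconj]
  rw [exp_diagonal, Unitary.conjStarAlgAut_apply]
  congr 3
  ext k
  rw [Pi.exp_def, Real.exp_eq_exp_ℝ]
  exact (NormedSpace.algebraMap_exp_comm (t * hA.eigenvalues k)).symm

theorem exp_neg_smul_mul_mul_exp_neg_smul (B : Matrix n n 𝕜) (t : ℝ) :
    NormedSpace.exp ((-t) • A) * B * NormedSpace.exp ((-t) • A) =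
      hA.conjEigenvectorUnitary (of fun p q =>
        (Real.exp (-(hA.eigenvalues p + hA.eigenvalues q) * t) : 𝕜) *
          hA.conjEigenvectorUnitary.symm B p q) := by
  conv_lhs => rw [hA.exp_smul_eq (-t), ← hA.conjEigenvectorUnitary.apply_symm_apply B,
    ← map_mul, ← map_mul]
  congr 1
  ext p q
  simp only [diagonal_mul, mul_diagonal, of_apply]
  have hexp : Real.exp (-(hA.eigenvalues p + hA.eigenvalues q) * t) =
      Real.exp (-t * hA.eigenvalues p) * Real.exp (-t * hA.eigenvalues q) := by
    rw [← Real.exp_add]; ring_nf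
  rw [hexp, RCLike.ofReal_mul]
  ring

end IsHermitian

namespace PosDef

variable {A : Matrix n n 𝕜}

theorem integrableOn_lyapunovIntegrand (hA : A.PosDef) (B : Matrix n n 𝕜) (i j : n) :
    IntegrableOn
      (fun t : ℝ => (NormedSpace.exp ((-t) • A) * B * NormedSpace.exp ((-t) • A)) i j)
      (Set.Ioi 0) := by
  simp only [hA.isHermitian.exp_neg_smul_mul_mul_exp_neg_smul, Unitary.conjStarAlgAut_apply]
  exact integrable_mul_mul_apply (fun p q => integrableOn_exp_neg_mul_mul_Ioi
    (add_pos (hA.eigenvalues_pos p) (hA.eigenvalues_pos q)) _) _ _ i j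

theorem lyapunovIntegral_eq (hA : A.PosDef) (B : Matrix n n 𝕜) :
    lyapunovIntegral A B = hA.isHermitian.conjEigenvectorUnitary (of fun p q =>
      hA.isHermitian.conjEigenvectorUnitary.symm B p q /
        (hA.isHermitian.eigenvalues p + hA.isHermitian.eigenvalues q : ℝ)) := by
  have hpos p q : 0 < hA.isHermitian.eigenvalues p + hA.isHermitian.eigenvalues q :=
    add_pos (hA.eigenvalues_pos p) (hA.eigenvalues_pos q)
  ext i j
  simp only [lyapunovIntegral, of_apply, hA.isHermitian.exp_neg_smul_mul_mul_exp_neg_smul,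
    Unitary.conjStarAlgAut_apply]
  refine (integral_mul_mul_apply
    (fun p q => integrableOn_exp_neg_mul_mul_Ioi (hpos p q) _) _ _ i j).trans ?_
  simp only [integral_exp_neg_mul_mul_Ioi (hpos _ _)]

theorem mul_lyapunovIntegral_add_lyapunovIntegral_mul (hA : A.PosDef) (B : Matrix n n 𝕜) :
    A * lyapunovIntegral A B + lyapunovIntegral A B * A = B := by
  set φ := hA.isHermitian.conjEigenvectorUnitary
  set d : n → 𝕜 := RCLike.ofReal ∘ hA.isHermitian.eigenvalues
  have hd p q : d p + d q ≠ 0 := by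
    simp only [d, Function.comp_apply]
    exact_mod_cast (add_pos (hA.eigenvalues_pos p) (hA.eigenvalues_pos q)).ne'
  have hX : lyapunovIntegral A B = φ (of fun p q => φ.symm B p q / (d p + d q)) := by
    simp only [hA.lyapunovIntegral_eq, d, Function.comp_apply, RCLike.ofReal_add, φ]
  have hA' : A = φ (diagonal d) := hA.isHermitian.spectral_theorem
  rw [hX, hA', ← map_mul, ← map_mul, ← map_add, diagonal_mul_add_mul_diagonal_eq hd,
    φ.apply_symm_apply]

theorem lyapunovOperator_bijective (hA : A.PosDef) : Function.Bijective (lyapunovOperator A) :=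
  have hsurj : Function.Surjective (lyapunovOperator A) := fun B =>
    ⟨lyapunovIntegral A B, hA.mul_lyapunovIntegral_add_lyapunovIntegral_mul B⟩
  ⟨LinearMap.injective_iff_surjective.2 hsurj, hsurj⟩

theorem eq_lyapunovIntegral_of_mul_add_mul_eq (hA : A.PosDef) {B Y : Matrix n n 𝕜}
    (hY : A * Y + Y * A = B) :
    Y = lyapunovIntegral A B :=
  hA.lyapunovOperator_bijective.1 <|
    hY.trans (hA.mul_lyapunovIntegral_add_lyapunovIntegral_mul B).symm

end PosDef

end Matrix

/-- For a symmetric positive definite `P` and arbitrary `B`, the integral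
`∫₀^∞ e^{-tP} B e^{-tP} dt` converges (entrywise) and is the unique solution `X` of the
Lyapunov equation `P * X + X * P = B`. -/
theorem lyapunov_integral_solution (n : ℕ) (P B : Matrix (Fin n) (Fin n) ℝ)
    (hP : P.PosDef) :
    (∀ i j : Fin n, IntegrableOn
      (fun t : ℝ =>
        (NormedSpace.exp ((-t) • P) * B * NormedSpace.exp ((-t) • P)) i j)
      (Set.Ioi (0 : ℝ))) ∧
    P * (Matrix.of fun i j : Fin n => ∫ t in Set.Ioi (0 : ℝ),
        (NormedSpace.exp ((-t) • P) * B * NormedSpace.exp ((-t) • P)) i j) +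
      (Matrix.of fun i j : Fin n => ∫ t in Set.Ioi (0 : ℝ),
        (NormedSpace.exp ((-t) • P) * B * NormedSpace.exp ((-t) • P)) i j) * P = B ∧
    (∀ Y : Matrix (Fin n) (Fin n) ℝ, P * Y + Y * P = B →
      Y = Matrix.of fun i j : Fin n => ∫ t in Set.Ioi (0 : ℝ),
        (NormedSpace.exp ((-t) • P) * B * NormedSpace.exp ((-t) • P)) i j) :=
  ⟨hP.integrableOn_lyapunovIntegrand B, hP.mul_lyapunovIntegral_add_lyapunovIntegral_mul B,
    fun _ hY => hP.eq_lyapunovIntegral_of_mul_add_mul_eq hY⟩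
end

section
/- Let M be an invertible real n×n matrix. Then every real n×n matrix E can be written uniquely as E = MK + M^{−T}S where K is skew-symmetric and S is symmetric; that is, the space of n×n matrices is the direct sum M·so(n) ⊕ M^{−T}·Sym(n). Moreover this decomposition is orthogonal with respect to the Frobenius inner product: tr((MK)(M^{−T}S)ᵀ) = 0 for all skew-symmetric K and symmetric S. -/
open Matrix

lemma trace_mul_transpose_self_zero {n : ℕ} (D : Matrix (Fin n) (Fin n) ℝ)
    (h : (D * Dᵀ).trace = 0) : D = 0 := by
  have h' : ∑ i, ∑ j, D i j * D i j = 0 := by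
    simpa [Matrix.trace, Matrix.diag, Matrix.mul_apply] using h
  ext i j
  have := Finset.sum_eq_zero_iff_of_nonneg (fun i _ => Finset.sum_nonneg
    (fun j _ => mul_self_nonneg (D i j))) |>.mp h' i (Finset.mem_univ i)
  have := Finset.sum_eq_zero_iff_of_nonneg (fun j _ => mul_self_nonneg (D i j)) |>.mp
    this j (Finset.mem_univ j)
  exact mul_self_eq_zero.mp this

lemma key_trace {n : ℕ} (M : Matrix (Fin n) (Fin n) ℝ) (hM : IsUnit M.det)
    (K S : Matrix (Fin n) (Fin n) ℝ) (hK : Kᵀ = -K) (hS : Sᵀ = S) :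
    ((M * K) * ((M⁻¹)ᵀ * S)ᵀ).trace = 0 := by
  have h1 : ((M⁻¹)ᵀ * S)ᵀ = S * M⁻¹ := by
    rw [Matrix.transpose_mul, Matrix.transpose_transpose, hS]
  have h2 : ((M * K) * (S * M⁻¹)).trace = (K * S).trace := by
    rw [Matrix.mul_assoc, Matrix.trace_mul_comm, Matrix.mul_assoc, Matrix.mul_assoc,
      Matrix.nonsing_inv_mul M hM, Matrix.mul_one]
  have h3 : (K * S).trace = -(K * S).trace := by
    nth_rewrite 1 [← Matrix.trace_transpose, Matrix.transpose_mul, hS, hK,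
      Matrix.trace_mul_comm]
    simp
  rw [h1, h2]; linarith

/-- For invertible `M`, every matrix `E` decomposes uniquely as `E = M * K + M⁻ᵀ * S` with
`K` skew-symmetric and `S` symmetric, and the decomposition is orthogonal for the
Frobenius inner product. -/
theorem decomposition_MK_MinvTS (n : ℕ) (M : Matrix (Fin n) (Fin n) ℝ)
    (hM : IsUnit M.det) :
    (∀ E : Matrix (Fin n) (Fin n) ℝ,
      ∃! p : Matrix (Fin n) (Fin n) ℝ × Matrix (Fin n) (Fin n) ℝ,
        p.1ᵀ = -p.1 ∧ p.2ᵀ = p.2 ∧ E = M * p.1 + (M⁻¹)ᵀ * p.2) ∧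
    (∀ K S : Matrix (Fin n) (Fin n) ℝ, Kᵀ = -K → Sᵀ = S →
      ((M * K) * ((M⁻¹)ᵀ * S)ᵀ).trace = 0) := by
  -- helper: if M*K + M⁻ᵀ*S = 0 with K skew, S symm, then K = 0 and S = 0
  have cancel : ∀ K S : Matrix (Fin n) (Fin n) ℝ, Kᵀ = -K → Sᵀ = S →
      M * K + (M⁻¹)ᵀ * S = 0 → K = 0 ∧ S = 0 := by
    intro K S hK hS h0
    have horth := key_trace M hM K S hK hS
    have hD : M * K = 0 := by
      apply trace_mul_transpose_self_zero
      have hDF : (M * K)ᵀ = -((M⁻¹)ᵀ * S)ᵀ := by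
        rw [eq_neg_of_add_eq_zero_left h0, Matrix.transpose_neg]
      rw [hDF]
      simpa using horth
    have hF : (M⁻¹)ᵀ * S = 0 := by
      have := h0
      rw [hD, zero_add] at this
      exact this
    constructor
    · have : M⁻¹ * (M * K) = K := by
        rw [← Matrix.mul_assoc, Matrix.nonsing_inv_mul M hM, Matrix.one_mul]
      rw [← this, hD, Matrix.mul_zero]
    · have : Mᵀ * ((M⁻¹)ᵀ * S) = S := by
        rw [← Matrix.mul_assoc, ← Matrix.transpose_mul, Matrix.nonsing_inv_mul M hM,
          Matrix.transpose_one, Matrix.one_mul]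
      rw [← this, hF, Matrix.mul_zero]
  refine ⟨?_, fun K S hK hS => key_trace M hM K S hK hS⟩
  -- existence via linear map
  let ψ : Matrix (Fin n) (Fin n) ℝ →ₗ[ℝ] Matrix (Fin n) (Fin n) ℝ :=
    { toFun := fun X => M * ((2:ℝ)⁻¹ • (X - Xᵀ)) + (M⁻¹)ᵀ * ((2:ℝ)⁻¹ • (X + Xᵀ))
      map_add' := by
        intro X Y
        simp only [Matrix.transpose_add, Matrix.transpose_smul, Matrix.transpose_sub,
          smul_add, smul_sub, Matrix.mul_add, Matrix.mul_sub, Matrix.mul_smul]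
        module
      map_smul' := by
        intro c X
        simp only [Matrix.transpose_add, Matrix.transpose_smul, Matrix.transpose_sub,
          smul_add, smul_sub, Matrix.mul_add, Matrix.mul_sub, Matrix.mul_smul,
          RingHom.id_apply]
        module }
  have hψinj : Function.Injective ψ := by
    rw [← LinearMap.ker_eq_bot, LinearMap.ker_eq_bot']
    intro X hX
    have hK : ((2:ℝ)⁻¹ • (X - Xᵀ))ᵀ = -((2:ℝ)⁻¹ • (X - Xᵀ)) := by
      simp [Matrix.transpose_smul, Matrix.transpose_sub]
      module
    have hS : ((2:ℝ)⁻¹ • (X + Xᵀ))ᵀ = (2:ℝ)⁻¹ • (X + Xᵀ) := by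
      simp [Matrix.transpose_smul, Matrix.transpose_add]
      module
    obtain ⟨h1, h2⟩ := cancel _ _ hK hS hX
    have : X = (2:ℝ)⁻¹ • (X - Xᵀ) + (2:ℝ)⁻¹ • (X + Xᵀ) := by module
    rw [this, h1, h2, add_zero]
  have hψsurj : Function.Surjective ψ :=
    (LinearMap.injective_iff_surjective).mp hψinj
  intro E
  obtain ⟨X, hX⟩ := hψsurj E
  refine ⟨⟨(2:ℝ)⁻¹ • (X - Xᵀ), (2:ℝ)⁻¹ • (X + Xᵀ)⟩, ⟨?_, ?_, ?_⟩, ?_⟩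
  · simp [Matrix.transpose_smul, Matrix.transpose_sub]; module
  · simp [Matrix.transpose_smul, Matrix.transpose_add]; module
  · exact hX.symm
  · rintro ⟨K, S⟩ ⟨hK, hS, hE⟩
    have hK0 : ((2:ℝ)⁻¹ • (X - Xᵀ))ᵀ = -((2:ℝ)⁻¹ • (X - Xᵀ)) := by
      simp [Matrix.transpose_smul, Matrix.transpose_sub]; module
    have hS0 : ((2:ℝ)⁻¹ • (X + Xᵀ))ᵀ = (2:ℝ)⁻¹ • (X + Xᵀ) := by
      simp [Matrix.transpose_smul, Matrix.transpose_add]; module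
    have hdiff : M * (K - (2:ℝ)⁻¹ • (X - Xᵀ)) + (M⁻¹)ᵀ * (S - (2:ℝ)⁻¹ • (X + Xᵀ)) = 0 := by
      have h1 : E = M * ((2:ℝ)⁻¹ • (X - Xᵀ)) + (M⁻¹)ᵀ * ((2:ℝ)⁻¹ • (X + Xᵀ)) := hX.symm
      rw [Matrix.mul_sub, Matrix.mul_sub, sub_add_sub_comm, hE.symm.trans h1, sub_self]
    have hKd : (K - (2:ℝ)⁻¹ • (X - Xᵀ))ᵀ = -(K - (2:ℝ)⁻¹ • (X - Xᵀ)) := by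
      rw [Matrix.transpose_sub, hK, hK0]; module
    have hSd : (S - (2:ℝ)⁻¹ • (X + Xᵀ))ᵀ = (S - (2:ℝ)⁻¹ • (X + Xᵀ)) := by
      rw [Matrix.transpose_sub, hS, hS0]
    obtain ⟨e1, e2⟩ := cancel _ _ hKd hSd hdiff
    have hKeq : K = (2:ℝ)⁻¹ • (X - Xᵀ) := sub_eq_zero.mp e1
    have hSeq : S = (2:ℝ)⁻¹ • (X + Xᵀ) := sub_eq_zero.mp e2
    exact Prod.ext hKeq hSeq
end

section
/- Let M be an invertible real n×n matrix. Then every real n×n matrix X can be written uniquely as X = K M^{−T} + S M where K is skew-symmetric and S is symmetric; that is, the space of n×n matrices is the direct sum so(n)·M^{−T} ⊕ Sym(n)·M. Moreover this decomposition is orthogonal with respect to the Frobenius inner product: tr((K M^{−T})(S M)ᵀ) = 0 for all skew-symmetric K and symmetric S. -/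
open Matrix

/-- If `tr (A Aᵀ) = 0` then `A = 0`. -/
lemma trace_mul_transpose_self_eq_zero {n : ℕ} {A : Matrix (Fin n) (Fin n) ℝ}
    (h : (A * Aᵀ).trace = 0) : A = 0 := by
  have h' : ∑ i, ∑ j, A i j ^ 2 = 0 := by
    rw [← h]; simp [Matrix.trace, Matrix.diag, Matrix.mul_apply, sq]
  ext i j
  have hi := (Finset.sum_eq_zero_iff_of_nonneg (fun i _ =>
    Finset.sum_nonneg (fun j _ => sq_nonneg (A i j)))).mp h' i (Finset.mem_univ i)
  have hij := (Finset.sum_eq_zero_iff_of_nonneg (fun j _ => sq_nonneg (A i j))).mp hi j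
    (Finset.mem_univ j)
  simpa using pow_eq_zero_iff (n := 2) (by norm_num) |>.mp hij

lemma trace_mul_transpose_self_nonneg {n : ℕ} (A : Matrix (Fin n) (Fin n) ℝ) :
    0 ≤ (A * Aᵀ).trace := by
  have : (A * Aᵀ).trace = ∑ i, ∑ j, A i j ^ 2 := by
    simp [Matrix.trace, Matrix.diag, Matrix.mul_apply, sq]
  rw [this]
  exact Finset.sum_nonneg fun i _ => Finset.sum_nonneg fun j _ => sq_nonneg _

/-- For invertible `M`, every matrix `X` decomposes uniquely as `X = K * M⁻ᵀ + S * M` with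
`K` skew-symmetric and `S` symmetric, and the decomposition is orthogonal for the
Frobenius inner product. -/
theorem decomposition_KMinvT_SM (n : ℕ) (M : Matrix (Fin n) (Fin n) ℝ)
    (hM : IsUnit M.det) :
    (∀ X : Matrix (Fin n) (Fin n) ℝ,
      ∃! p : Matrix (Fin n) (Fin n) ℝ × Matrix (Fin n) (Fin n) ℝ,
        p.1ᵀ = -p.1 ∧ p.2ᵀ = p.2 ∧ X = p.1 * (M⁻¹)ᵀ + p.2 * M) ∧
    (∀ K S : Matrix (Fin n) (Fin n) ℝ, Kᵀ = -K → Sᵀ = S →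
      ((K * (M⁻¹)ᵀ) * (S * M)ᵀ).trace = 0) := by
  have hMM : M⁻¹ * M = 1 := Matrix.nonsing_inv_mul M hM
  have hMM' : M * M⁻¹ = 1 := Matrix.mul_nonsing_inv M hM
  have hTinv : Mᵀ * (M⁻¹)ᵀ = 1 := by rw [← Matrix.transpose_mul, hMM]; exact Matrix.transpose_one
  have hTinv' : (M⁻¹)ᵀ * Mᵀ = 1 := by rw [← Matrix.transpose_mul, hMM']; exact Matrix.transpose_one
  obtain ⟨P, hP⟩ : ∃ P : Matrix (Fin n) (Fin n) ℝ, P = M * Mᵀ := ⟨_, rfl⟩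
  have hPsymm : Pᵀ = P := by rw [hP, Matrix.transpose_mul, Matrix.transpose_transpose]
  -- key: X ↦ P X + X P is injective, hence surjective
  have hLapp : ∀ X, (LinearMap.mulLeft ℝ P + LinearMap.mulRight ℝ P) X = P * X + X * P :=
    fun X => rfl
  have hLinj : Function.Injective (LinearMap.mulLeft ℝ P + LinearMap.mulRight ℝ P) := by
    rw [injective_iff_map_eq_zero]
    intro X hX
    rw [hLapp] at hX
    have h0 : ((P * X + X * P) * Xᵀ).trace = 0 := by rw [hX, Matrix.zero_mul, Matrix.trace_zero]
    have e1 : (P * X * Xᵀ).trace = ((Mᵀ * X) * (Mᵀ * X)ᵀ).trace := by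
      have a1 : P * X * Xᵀ = M * (Mᵀ * X * Xᵀ) := by rw [hP]; noncomm_ring
      have a2 : (Mᵀ * X) * (Mᵀ * X)ᵀ = (Mᵀ * X * Xᵀ) * M := by
        rw [Matrix.transpose_mul, Matrix.transpose_transpose]; noncomm_ring
      rw [a1, a2, Matrix.trace_mul_comm]
    have e2 : (X * P * Xᵀ).trace = ((X * M) * (X * M)ᵀ).trace := by
      have a1 : X * P * Xᵀ = (X * M) * (X * M)ᵀ := by
        rw [Matrix.transpose_mul, hP]; noncomm_ring
      rw [a1]
    rw [Matrix.add_mul, Matrix.trace_add, e1, e2] at h0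
    have hn1 := trace_mul_transpose_self_nonneg (Mᵀ * X)
    have hn2 := trace_mul_transpose_self_nonneg (X * M)
    have hz2 : ((X * M) * (X * M)ᵀ).trace = 0 := by linarith
    have hXM : X * M = 0 := trace_mul_transpose_self_eq_zero hz2
    calc X = X * M * M⁻¹ := by rw [Matrix.mul_assoc, hMM', Matrix.mul_one]
    _ = 0 := by rw [hXM, Matrix.zero_mul]
  have hLsurj : Function.Surjective (LinearMap.mulLeft ℝ P + LinearMap.mulRight ℝ P) :=
    (LinearMap.injective_iff_surjective).mp hLinj
  constructor
  · intro X
    obtain ⟨S, hS⟩ := hLsurj (M * Xᵀ + X * Mᵀ)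
    rw [hLapp] at hS
    have hSsymm : Sᵀ = S := by
      apply hLinj
      rw [hLapp, hLapp]
      have t1 : P * Sᵀ + Sᵀ * P = (P * S + S * P)ᵀ := by
        rw [Matrix.transpose_add, Matrix.transpose_mul, Matrix.transpose_mul, hPsymm]; abel
      rw [t1, hS, Matrix.transpose_add, Matrix.transpose_mul, Matrix.transpose_mul,
        Matrix.transpose_transpose, Matrix.transpose_transpose]
      abel
    obtain ⟨K, hK⟩ : ∃ K : Matrix (Fin n) (Fin n) ℝ, K = X * Mᵀ - S * P := ⟨_, rfl⟩
    have hKT : Kᵀ = M * Xᵀ - P * S := by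
      rw [hK, Matrix.transpose_sub, Matrix.transpose_mul, Matrix.transpose_mul,
        Matrix.transpose_transpose, hPsymm, hSsymm]
    have hMX : M * Xᵀ = P * S + S * P - X * Mᵀ := by rw [hS]; abel
    have hKskew : Kᵀ = -K := by rw [hKT, hMX, hK]; abel
    have hKMT : K * (M⁻¹)ᵀ = X - S * M := by
      have h1 : K * (M⁻¹)ᵀ = X * (Mᵀ * (M⁻¹)ᵀ) - S * M * (Mᵀ * (M⁻¹)ᵀ) := by
        rw [hK, hP]; noncomm_ring
      rw [h1, hTinv, Matrix.mul_one, Matrix.mul_one]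
    have hXdec : X = K * (M⁻¹)ᵀ + S * M := by rw [hKMT]; abel
    refine ⟨(K, S), ⟨hKskew, hSsymm, hXdec⟩, ?_⟩
    rintro ⟨K', S'⟩ ⟨hK'skew, hS'symm, hdec⟩
    dsimp only at hK'skew hS'symm hdec
    have hKK : K' * (M⁻¹)ᵀ + S' * M = K * (M⁻¹)ᵀ + S * M := hdec.symm.trans hXdec
    have hKK2 : K' + S' * P = K + S * P := by
      have h2 := congrArg (fun Y => Y * Mᵀ) hKK
      simpa only [Matrix.add_mul, Matrix.mul_assoc, hTinv', Matrix.mul_one, ← hP] using h2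
    obtain ⟨T, hT⟩ : ∃ T : Matrix (Fin n) (Fin n) ℝ, T = S - S' := ⟨_, rfl⟩
    have hTsymm : Tᵀ = T := by rw [hT, Matrix.transpose_sub, hSsymm, hS'symm]
    have hDT : K' - K = T * P := by
      rw [hT, Matrix.sub_mul, sub_eq_sub_iff_add_eq_add, hKK2, add_comm]
    have hskew : (T * P)ᵀ = -(T * P) := by
      rw [← hDT, Matrix.transpose_sub, hK'skew, hKskew]; abel
    have hPT : P * T = -(T * P) := by
      rw [← hskew, Matrix.transpose_mul, hPsymm, hTsymm]
    have htr : ((Mᵀ * T) * (Mᵀ * T)ᵀ).trace = 0 := by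
      have a0 : (Mᵀ * T) * (Mᵀ * T)ᵀ = Mᵀ * (T * T * M) := by
        rw [Matrix.transpose_mul, Matrix.transpose_transpose, hTsymm]; noncomm_ring
      have e : ((Mᵀ * T) * (Mᵀ * T)ᵀ).trace = (P * (T * T)).trace := by
        calc ((Mᵀ * T) * (Mᵀ * T)ᵀ).trace = (Mᵀ * (T * T * M)).trace := by rw [a0]
          _ = ((T * T * M) * Mᵀ).trace := Matrix.trace_mul_comm _ _
          _ = ((T * T) * P).trace := by
              rw [show (T * T * M) * Mᵀ = (T * T) * P from by rw [hP]; noncomm_ring]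
          _ = (P * (T * T)).trace := Matrix.trace_mul_comm _ _
      have e2 : (P * (T * T)).trace = -(P * (T * T)).trace := by
        calc (P * (T * T)).trace = ((-(T * P)) * T).trace := by
              rw [show P * (T * T) = (-(T * P)) * T from by rw [← hPT]; noncomm_ring]
          _ = -((T * (P * T)).trace) := by
              rw [show (-(T * P)) * T = -(T * (P * T)) from by noncomm_ring, Matrix.trace_neg]
          _ = -(P * (T * T)).trace := by rw [Matrix.trace_mul_comm, Matrix.mul_assoc]
      rw [e]; linarith
    have hMT : Mᵀ * T = 0 := trace_mul_transpose_self_eq_zero htr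
    have hT0 : T = 0 := by
      calc T = (M⁻¹)ᵀ * (Mᵀ * T) := by rw [← Matrix.mul_assoc, hTinv', Matrix.one_mul]
      _ = 0 := by rw [hMT, Matrix.mul_zero]
    have hS0 : S' = S := by
      have h5 : S - S' = 0 := hT ▸ hT0
      exact (sub_eq_zero.mp h5).symm
    have hK0 : K' = K := by
      have h6 : K' - K = 0 := by rw [hDT, hT0, Matrix.zero_mul]
      exact sub_eq_zero.mp h6
    exact Prod.ext hK0 hS0
  · -- orthogonality
    intro K S hKs hSs
    have hid : (K * (M⁻¹)ᵀ * (S * M)ᵀ) = K * S := by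
      rw [Matrix.transpose_mul, hSs, Matrix.mul_assoc, ← Matrix.mul_assoc (M⁻¹)ᵀ, hTinv',
        Matrix.one_mul]
    rw [hid]
    have h1 : (K * S).trace = ((K * S)ᵀ).trace := (Matrix.trace_transpose _).symm
    rw [Matrix.transpose_mul, hSs, hKs, Matrix.mul_neg, Matrix.trace_neg,
      Matrix.trace_mul_comm] at h1
    rw [Matrix.trace_mul_comm]
    linarith
end

section
/- Let n ≥ 3 and let λ ∈ ℝⁿ have all entries positive. Let D(λ) be the symmetric n×n matrix with diagonal entries D_{ii} = Σ_{j ≠ i} 1/(λ_i + λ_j)² and off-diagonal entries D_{ik} = 1/(λ_i + λ_k)² for i ≠ k. Then D(λ) is positive definite. (D(λ) is the negative of the Jacobian matrix of the map α at λ.) -/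
open Matrix Finset

/-!
With `w i j = 1 / (λ_i + λ_j)²`, `D(λ)` is the signless Laplacian of the complete graph with
positive symmetric weights `w`, so `xᵀ D x = ½ Σ_{i ≠ j} w i j (x_i + x_j)²`. It vanishes only if `x_i + x_j = 0` for all `i ≠ j`, and as soon as
there are three indices (an odd cycle) this forces `x = 0`.
-/

variable {ι : Type*} [Fintype ι] [DecidableEq ι]

def signlessLaplacian (w : ι → ι → ℝ) : Matrix ι ι ℝ :=
  Matrix.of fun i k => if i = k then ∑ j ∈ univ.erase i, w i j else w i k

theorem signlessLaplacian_isHermitian {w : ι → ι → ℝ} (hw : ∀ i j, w i j = w j i) :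
    (signlessLaplacian w).IsHermitian := by
  ext i k
  simp only [signlessLaplacian, conjTranspose_apply, of_apply, star_trivial]
  rcases eq_or_ne i k with rfl | hik
  · rfl
  · rw [if_neg hik.symm, if_neg hik, hw]

theorem dotProduct_signlessLaplacian_mulVec (w : ι → ι → ℝ) (x : ι → ℝ) :
    x ⬝ᵥ signlessLaplacian w *ᵥ x = ∑ i, ∑ j ∈ univ.erase i, w i j * x i * (x i + x j) := by
  refine sum_congr rfl fun i _ => ?_
  rw [mulVec, dotProduct, ← add_sum_erase _ _ (mem_univ i)]
  simp only [signlessLaplacian, of_apply, if_true]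
  rw [sum_mul, ← sum_add_distrib, mul_sum]
  refine sum_congr rfl fun j hj => ?_
  rw [if_neg (ne_of_mem_erase hj).symm]
  ring

theorem sum_sum_erase_comm {M : Type*} [AddCommMonoid M] (f : ι → ι → M) :
    ∑ i, ∑ j ∈ univ.erase i, f i j = ∑ i, ∑ j ∈ univ.erase i, f j i :=
  sum_comm' (by simp [ne_comm])

theorem two_mul_dotProduct_signlessLaplacian_mulVec {w : ι → ι → ℝ}
    (hw : ∀ i j, w i j = w j i) (x : ι → ℝ) :
    2 * (x ⬝ᵥ signlessLaplacian w *ᵥ x) =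
      ∑ i, ∑ j ∈ univ.erase i, w i j * (x i + x j) ^ 2 := by
  rw [dotProduct_signlessLaplacian_mulVec, two_mul]
  nth_rw 2 [sum_sum_erase_comm]
  rw [← sum_add_distrib]
  refine sum_congr rfl fun i _ => ?_
  rw [← sum_add_distrib]
  refine sum_congr rfl fun j _ => ?_
  rw [hw j i]
  ring

theorem exists_ne_add_ne_zero (hcard : 3 ≤ Fintype.card ι) {x : ι → ℝ} (hx : x ≠ 0) :
    ∃ a b, a ≠ b ∧ x a + x b ≠ 0 := by
  obtain ⟨i, hi⟩ := Function.ne_iff.mp hx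
  by_contra! h
  have hcard' : 1 < #(univ.erase i) := by
    rw [card_erase_of_mem (mem_univ i), card_univ]
    omega
  obtain ⟨j, hj, k, hk, hjk⟩ := one_lt_card.mp hcard'
  have hij := h i j (ne_of_mem_erase hj).symm
  have hik := h i k (ne_of_mem_erase hk).symm
  have hjk' := h j k hjk
  exact hi (by simp only [Pi.zero_apply]; linarith)

theorem signlessLaplacian_posDef (hcard : 3 ≤ Fintype.card ι) {w : ι → ι → ℝ}
    (hw : ∀ i j, w i j = w j i) (hpos : ∀ i j, i ≠ j → 0 < w i j) :
    (signlessLaplacian w).PosDef := by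
  refine posDef_iff_dotProduct_mulVec.mpr ⟨signlessLaplacian_isHermitian hw, fun x hx => ?_⟩
  obtain ⟨a, b, hab, hxab⟩ := exists_ne_add_ne_zero hcard hx
  have hterm : ∀ i, ∀ j ∈ univ.erase i, 0 ≤ w i j * (x i + x j) ^ 2 := fun i j hj =>
    mul_nonneg (hpos i j (ne_of_mem_erase hj).symm).le (sq_nonneg _)
  have hsum : 0 < ∑ i, ∑ j ∈ univ.erase i, w i j * (x i + x j) ^ 2 :=
    sum_pos' (fun i _ => sum_nonneg (hterm i)) ⟨a, mem_univ a,
      sum_pos' (hterm a) ⟨b, mem_erase.mpr ⟨hab.symm, mem_univ b⟩,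
        mul_pos (hpos a b hab) (sq_pos_of_ne_zero hxab)⟩⟩
  rw [star_trivial]
  linarith [two_mul_dotProduct_signlessLaplacian_mulVec hw x]

/-- For `n ≥ 3` and `λ ∈ ℝⁿ` with positive entries, the symmetric matrix with diagonal
entries `Σ_{j ≠ i} 1/(λ_i + λ_j)²` and off-diagonal entries `1/(λ_i + λ_k)²` is positive
definite. It is the negative of the Jacobian of `α` at `λ`. -/
theorem neg_jacobian_alpha_posDef (n : ℕ) (hn : 3 ≤ n) (lam : Fin n → ℝ)
    (hlam : ∀ i, 0 < lam i) :
    (Matrix.of fun i k : Fin n =>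
      if i = k then ∑ j ∈ Finset.univ.erase i, 1 / (lam i + lam j) ^ 2
      else 1 / (lam i + lam k) ^ 2).PosDef := by
  refine signlessLaplacian_posDef (w := fun i j => 1 / (lam i + lam j) ^ 2)
    (by simpa using hn) (fun i j => by rw [add_comm]) (fun i j _ => ?_)
  have := hlam i
  have := hlam j
  positivity
end
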